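/- Let F be a field of characteristic 0, G a finite abelian group, and σ a group endomorphism of G extended F-linearly to the group algebra FG. Then FG has no non-zero σ-derivations, i.e., every F-linear map D : FG → FG satisfying D(xy) = D(x)σ(y) + σ(x)D(y) is zero. -/

import Mathlib

/-!
A σ-derivation `D` kills `1`, and in a commutative ring the twisted Leibniz rule gives
`D (x ^ (n + 1)) = (n + 1) • (σ x ^ n * D x)`. If `x ^ r = 1` with `r`
invertible, then `σ x` is a unit and `r • (σ x ^ (r - 1) * D x) = D 1 = 0`, so `D x = 0`.
In `FG` every group element has finite order and order is invertible in characteristic zero,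
so `D` kills the basis `G` and hence vanishes.
-/

/-- `D` is a `σ`-derivation of `A`. -/
def IsTwistedDerivation {A : Type*} [Semiring A] (σ : A →+* A) (D : A → A) : Prop :=
  ∀ x y, D (x * y) = D x * σ y + σ x * D y

namespace IsTwistedDerivation

section Ring

variable {A : Type*} [Ring A] {σ : A →+* A} {D : A → A}

theorem map_one (hD : IsTwistedDerivation σ D) : D 1 = 0 := by
  have h := hD 1 1
  rw [mul_one, σ.map_one, mul_one, one_mul] at h
  exact left_eq_add.mp h

end Ring

variable {A : Type*} [CommRing A] {σ : A →+* A} {D : A → A}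

theorem map_pow_succ (hD : IsTwistedDerivation σ D) (x : A) (n : ℕ) :
    D (x ^ (n + 1)) = (n + 1) • (σ x ^ n * D x) := by
  induction n with
  | zero => simp
  | succ n ih =>
    rw [pow_succ, hD, ih, map_pow, succ_nsmul]
    ring

theorem map_eq_zero_of_pow_eq_one (hD : IsTwistedDerivation σ D) {x : A} {r : ℕ}
    (hr_pos : 0 < r) (hxr : x ^ r = 1) (hr : IsUnit (r : A)) : D x = 0 := by
  obtain ⟨n, rfl⟩ := Nat.exists_eq_add_one.mpr hr_pos
  have hσx : IsUnit (σ x ^ n) :=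
    IsUnit.of_mul_eq_one (σ x) (by rw [← pow_succ, ← map_pow, hxr, σ.map_one])
  have h : (n + 1) • (σ x ^ n * D x) = 0 := by rw [← hD.map_pow_succ, hxr, hD.map_one]
  rw [nsmul_eq_mul] at h
  exact (hσx.mul_right_eq_zero).mp ((hr.mul_right_eq_zero).mp h)

end IsTwistedDerivation

theorem stmt_16 {F G : Type*} [Field F] [CharZero F] [CommGroup G] [Fintype G]
    (σ : G →* G)
    (D : MonoidAlgebra F G →ₗ[F] MonoidAlgebra F G)
    (hD : ∀ x y : MonoidAlgebra F G,
      D (x * y) = D x * MonoidAlgebra.mapDomainAlgHom F F σ y +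
        MonoidAlgebra.mapDomainAlgHom F F σ x * D y) :
    D = 0 := by
  have hD' : IsTwistedDerivation (MonoidAlgebra.mapDomainAlgHom F F σ : _ →+* _) D := hD
  have hof : ∀ g : G, D (MonoidAlgebra.of F G g) = 0 := fun g ↦
    hD'.map_eq_zero_of_pow_eq_one (orderOf_pos g)
      (by rw [← map_pow, pow_orderOf_eq_one, map_one])
      (by
        rw [← map_natCast (algebraMap F (MonoidAlgebra F G))]
        exact (Nat.cast_ne_zero.mpr (orderOf_pos g).ne').isUnit.map _)
  refine LinearMap.ext fun x ↦ ?_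
  rw [LinearMap.zero_apply]
  induction x using MonoidAlgebra.induction_on with
  | of g => exact hof g
  | add x y hx hy => rw [map_add, hx, hy, add_zero]
  | smul c x hx => rw [map_smul, hx, smul_zero]
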